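/- There exist R > 0 and C > 0 such that for all z ∈ ℂ ∖ (−∞, 0] with |z| ≥ R, |g(z) − z^{1/2} − 𝔤₁ z^{−1/2}| ≤ C |z|^{−3/2}, where 𝔤₁ = 1/2 + (−1)^{k+1} λ^k c_1 / s^{k+1/2} and z^{1/2}, z^{−1/2} denote principal branches. -/

import Mathlib

open Complex Set

/-- The generalized binomial coefficient `C(1/2, n) = (1/2)(1/2−1)⋯(1/2−n+1)/n!`. -/
noncomputable def halfChoose (n : ℕ) : ℝ :=
  (∏ i ∈ Finset.range n, (1 / 2 - (i : ℝ))) / (Nat.factorial n)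

/-- The g-function `g(z) = (z+1)^{1/2} (1 + (−1)^{k+1} (λ^k/s^{k+1/2}) ∑_{j=1}^k c_j z^{−j})`,
with the principal branch of `(z+1)^{1/2}`. -/
noncomputable def gFun (k : ℕ) (lam s : ℝ) (c : ℕ → ℝ) (z : ℂ) : ℂ :=
  (z + 1) ^ ((1 : ℂ) / 2) *
    (1 + ((-1 : ℂ)) ^ (k + 1) * ((lam ^ k : ℝ) : ℂ) / ((s ^ ((k : ℝ) + 1 / 2) : ℝ) : ℂ) *
      ∑ j ∈ Finset.Icc 1 k, ((c j : ℝ) : ℂ) * z ^ (-(j : ℤ)))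

/-! With `a = √(z+1)` and `b = √z` (principal branches) we have `(a + b)(a - b) = 1`, and since
both roots lie in the closed right half-plane with imaginary parts of the sign of `Im z`,
`‖a + b‖ ≥ ‖b‖ = ‖z‖^{1/2}`. Hence `a - b = (a + b)⁻¹ = O(‖z‖^{-1/2})` and
`a - b - 1/(2b) = -1/(2b(a+b)²) = O(‖z‖^{-3/2})`. Splitting off the `j = 1` term of the sum, the
error `g(z) - b - 𝔤₁/b` becomes `(a - b - 1/(2b)) + (a - b)·A·∑_{j≥1} + b·A·∑_{j≥2}`, where
`A = (−1)^{k+1} λ^k / s^{k+1/2}` and `∑_{j≥m} = ∑_{j=m}^k c_j z^{−j} = O(‖z‖^{−m})`, so each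
summand is `O(‖z‖^{-3/2})`. -/

theorem norm_sum_mul_zpow_neg_le {𝕜 : Type*} [NormedDivisionRing 𝕜] {z : 𝕜} (hz : 1 ≤ ‖z‖)
    (c : ℕ → 𝕜) {s : Finset ℕ} {n : ℕ} (hs : ∀ j ∈ s, n ≤ j) :
    ‖∑ j ∈ s, c j * z ^ (-(j : ℤ))‖ ≤ (∑ j ∈ s, ‖c j‖) / ‖z‖ ^ n := by
  rw [Finset.sum_div]
  refine (norm_sum_le _ _).trans (Finset.sum_le_sum fun j hj ↦ ?_)
  rw [norm_mul, norm_zpow, zpow_neg, zpow_natCast, div_eq_mul_inv]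
  gcongr
  exact hs j hj

open ComplexConjugate

namespace Complex

theorem cpow_one_div_two (w : ℂ) : w ^ ((1 : ℂ) / 2) = sqrt w := by
  rw [one_div, sqrt]

theorem cpow_neg_one_div_two (w : ℂ) : w ^ (-(1 : ℂ) / 2) = (sqrt w)⁻¹ := by
  rw [neg_div, cpow_neg, cpow_one_div_two]

theorem sqrt_mul_self (w : ℂ) : sqrt w * sqrt w = w := by
  rw [← sq, sqrt, cpow_ofNat_inv_pow]

theorem re_sqrt_mul_conj_sqrt_nonneg {w w' : ℂ} (h : w.im = w'.im) :
    0 ≤ (sqrt w * conj (sqrt w')).re := by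
  have hre : ∀ v : ℂ, 0 ≤ (sqrt v).re := fun v ↦ by rw [sqrt, cpow_inv_two_re]; positivity
  rw [mul_re, conj_re, conj_im, mul_neg, sub_neg_eq_add]
  refine add_nonneg (mul_nonneg (hre w) (hre w')) ?_
  rcases le_or_gt 0 w.im with hw | hw
  · rw [sqrt, sqrt, cpow_inv_two_im_eq_sqrt hw, cpow_inv_two_im_eq_sqrt (h ▸ hw)]
    positivity
  · rw [sqrt, sqrt, cpow_inv_two_im_eq_neg_sqrt hw, cpow_inv_two_im_eq_neg_sqrt (h ▸ hw),
      neg_mul_neg]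
    positivity

theorem norm_sqrt_le_norm_sqrt_add_sqrt {w w' : ℂ} (h : w.im = w'.im) :
    ‖sqrt w'‖ ≤ ‖sqrt w + sqrt w'‖ := by
  rw [← sq_le_sq₀ (norm_nonneg _) (norm_nonneg _), Complex.sq_norm, Complex.sq_norm, normSq_add]
  linarith [normSq_nonneg (sqrt w), re_sqrt_mul_conj_sqrt_nonneg h]

theorem sqrt_add_one_add_sqrt_mul_sub (z : ℂ) :
    (sqrt (z + 1) + sqrt z) * (sqrt (z + 1) - sqrt z) = 1 := by
  linear_combination sqrt_mul_self (z + 1) - sqrt_mul_self z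

theorem sqrt_ne_zero {z : ℂ} (hz : z ≠ 0) : sqrt z ≠ 0 := by
  intro h
  exact hz (by rw [← sqrt_mul_self z, h, mul_zero])

theorem norm_sqrt_le_norm_sqrt_add_one_add_sqrt (z : ℂ) : ‖sqrt z‖ ≤ ‖sqrt (z + 1) + sqrt z‖ :=
  norm_sqrt_le_norm_sqrt_add_sqrt (by simp)

theorem norm_sqrt_add_one_sub_sqrt_le {z : ℂ} (hz : z ≠ 0) :
    ‖sqrt (z + 1) - sqrt z‖ ≤ ‖sqrt z‖⁻¹ := by
  rw [eq_inv_of_mul_eq_one_right (sqrt_add_one_add_sqrt_mul_sub z), norm_inv]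
  exact inv_anti₀ (norm_pos_iff.2 (sqrt_ne_zero hz)) (norm_sqrt_le_norm_sqrt_add_one_add_sqrt z)

theorem norm_sqrt_add_one_sub_sqrt_sub_inv_le {z : ℂ} (hz : z ≠ 0) :
    ‖sqrt (z + 1) - sqrt z - (2 * sqrt z)⁻¹‖ ≤ (2 * ‖sqrt z‖ ^ 3)⁻¹ := by
  set a := sqrt (z + 1)
  set b := sqrt z
  have hprod : (a + b) * (a - b) = 1 := sqrt_add_one_add_sqrt_mul_sub z
  have hb : b ≠ 0 := sqrt_ne_zero hz
  have hab : a + b ≠ 0 := left_ne_zero_of_mul_eq_one hprod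
  have key : a - b - (2 * b)⁻¹ = -(2 * b * (a + b) ^ 2)⁻¹ := by
    field_simp
    linear_combination (2 * b * (a + b) - 1) * hprod
  have hle : ‖b‖ ≤ ‖a + b‖ := norm_sqrt_le_norm_sqrt_add_one_add_sqrt z
  have hb0 : 0 < ‖b‖ := norm_pos_iff.2 hb
  rw [key, norm_neg, norm_inv, norm_mul, norm_mul, norm_pow, Complex.norm_two]
  refine inv_anti₀ (by positivity) ?_
  calc 2 * ‖b‖ ^ 3 = 2 * ‖b‖ * ‖b‖ ^ 2 := by ring
    _ ≤ 2 * ‖b‖ * ‖a + b‖ ^ 2 := by gcongr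

theorem norm_sqrt_add_one_mul_sub_le {z : ℂ} (hz : 1 ≤ ‖z‖) (A c₁ T : ℂ) {M₁ M₂ : ℝ}
    (hT₁ : ‖c₁ * z⁻¹ + T‖ ≤ M₁ / ‖z‖) (hT : ‖T‖ ≤ M₂ / ‖z‖ ^ 2) :
    ‖sqrt (z + 1) * (1 + A * (c₁ * z⁻¹ + T)) - sqrt z - (1 / 2 + A * c₁) * (sqrt z)⁻¹‖
      ≤ (1 / 2 + ‖A‖ * (M₁ + M₂)) * ‖z‖ ^ (-(3 : ℝ) / 2) := by
  have hz0 : z ≠ 0 := norm_pos_iff.1 (by linarith)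
  set a := sqrt (z + 1)
  set b := sqrt z
  have hb : b ≠ 0 := sqrt_ne_zero hz0
  have hb0 : 0 < ‖b‖ := norm_pos_iff.2 hb
  have hzb : z = b * b := (sqrt_mul_self z).symm
  have hbz : ‖z‖ = ‖b‖ ^ 2 := by rw [hzb, norm_mul, sq]
  have hdecomp : a * (1 + A * (c₁ * z⁻¹ + T)) - b - (1 / 2 + A * c₁) * b⁻¹ =
      (a - b - (2 * b)⁻¹) + (a - b) * (A * (c₁ * z⁻¹ + T)) + b * (A * T) := by
    rw [hzb]
    field_simp
    ring
  have hrpow : ‖z‖ ^ (-(3 : ℝ) / 2) = (‖b‖ ^ 3)⁻¹ := by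
    rw [hbz, ← Real.rpow_natCast, ← Real.rpow_mul hb0.le, ← Real.rpow_natCast,
      ← Real.rpow_neg hb0.le]
    norm_num
  rw [hbz] at hT₁ hT
  calc _ = ‖(a - b - (2 * b)⁻¹) + (a - b) * (A * (c₁ * z⁻¹ + T)) + b * (A * T)‖ := by
        rw [hdecomp]
    _ ≤ ‖a - b - (2 * b)⁻¹‖ + ‖a - b‖ * (‖A‖ * ‖c₁ * z⁻¹ + T‖) + ‖b‖ * (‖A‖ * ‖T‖) := by
        refine norm_add₃_le.trans_eq ?_
        simp only [norm_mul]
    _ ≤ (2 * ‖b‖ ^ 3)⁻¹ + ‖b‖⁻¹ * (‖A‖ * (M₁ / ‖b‖ ^ 2)) + ‖b‖ * (‖A‖ * (M₂ / (‖b‖ ^ 2) ^ 2)) := by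
        gcongr
        · exact norm_sqrt_add_one_sub_sqrt_sub_inv_le hz0
        · exact norm_sqrt_add_one_sub_sqrt_le hz0
    _ = (1 / 2 + ‖A‖ * (M₁ + M₂)) * ‖z‖ ^ (-(3 : ℝ) / 2) := by
        rw [hrpow]
        field_simp
        ring

end Complex

theorem gFun_asymptotics_at_infinity (k : ℕ) (hk : 1 ≤ k) (lam s : ℝ) (c : ℕ → ℝ) :
    ∃ R > (0 : ℝ), ∃ C > (0 : ℝ), ∀ z : ℂ, ¬(z.im = 0 ∧ z.re ≤ 0) →
      R ≤ ‖z‖ →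
      ‖(gFun k lam s c z - z ^ ((1 : ℂ) / 2)
          - (((1 / 2 + (-1 : ℝ) ^ (k + 1) * lam ^ k * c 1 / s ^ ((k : ℝ) + 1 / 2) : ℝ)) : ℂ)
            * z ^ (-(1 : ℂ) / 2))‖
        ≤ C * (‖z‖) ^ (-(3 : ℝ) / 2) := by
  set A : ℂ := (-1 : ℂ) ^ (k + 1) * ((lam ^ k : ℝ) : ℂ) / ((s ^ ((k : ℝ) + 1 / 2) : ℝ) : ℂ)
  set M₁ := ∑ j ∈ Finset.Icc 1 k, ‖((c j : ℝ) : ℂ)‖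
  set M₂ := ∑ j ∈ Finset.Ioc 1 k, ‖((c j : ℝ) : ℂ)‖
  refine ⟨1, one_pos, 1 / 2 + ‖A‖ * (M₁ + M₂), by positivity, fun z _ hz ↦ ?_⟩
  have hsplit : ∑ j ∈ Finset.Icc 1 k, ((c j : ℝ) : ℂ) * z ^ (-(j : ℤ)) =
      (c 1 : ℂ) * z⁻¹ + ∑ j ∈ Finset.Ioc 1 k, ((c j : ℝ) : ℂ) * z ^ (-(j : ℤ)) := by
    rw [← Finset.add_sum_Ioc_eq_sum_Icc hk, Nat.cast_one, zpow_neg_one]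
  have hg₁ : ((1 / 2 + (-1 : ℝ) ^ (k + 1) * lam ^ k * c 1 / s ^ ((k : ℝ) + 1 / 2) : ℝ) : ℂ) =
      1 / 2 + A * c 1 := by
    simp only [A]
    push_cast
    ring
  have hT₁ := norm_sum_mul_zpow_neg_le hz (fun j ↦ (c j : ℂ)) (s := Finset.Icc 1 k) (n := 1)
    (fun j hj ↦ (Finset.mem_Icc.1 hj).1)
  have hT := norm_sum_mul_zpow_neg_le hz (fun j ↦ (c j : ℂ)) (s := Finset.Ioc 1 k) (n := 2)
    (fun j hj ↦ (Finset.mem_Ioc.1 hj).1)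
  rw [hsplit, pow_one] at hT₁
  rw [gFun, hsplit, hg₁, Complex.cpow_one_div_two, Complex.cpow_one_div_two,
    Complex.cpow_neg_one_div_two]
  exact Complex.norm_sqrt_add_one_mul_sub_le hz A _ _ hT₁ hT
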